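/- Let $\xi>0$, $\rho\in(-1,1)$, and let $f,g:[0,T]\to\mathbb{C}$ be bounded measurable with $\Re f=\Re g=0$. Define $\psi_0(s) = -\xi^{-1}(\rho f(s)+\sqrt{f(s)(1-(1-\rho^2)f(s))-2g(s)})$ (principal square root) and $E=\{s\in[0,T]: (f(s),g(s))\neq(0,0)\}$. Then there exists a finite constant $C>0$ such that $|\psi_0(s)|/(-\Re\psi_0(s)) \le C$ for all $s\in E$; in particular $\Re\psi_0(s)<0$ on $E$. -/

import Mathlib

open Set

/-- `ψ₀` in the regime `H < -1/2` (principal square root via `cpow (1/2)`). -/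
noncomputable def psi0NL (ξ ρ : ℝ) (f g : ℝ → ℂ) (s : ℝ) : ℂ :=
  -((ξ:ℂ))⁻¹ * ((ρ:ℂ) * f s
    + (f s * (1 - (1 - (ρ:ℂ)^2) * f s) - 2 * g s) ^ ((1:ℂ)/2))

/-!
Writing `f = i x`, `g = i y`, the radicand is `z = (1 - ρ²) x² + i (x - 2y)`: it lies in the closed
right half-plane and vanishes only when `(f, g) = (0, 0)`. For such `z` the principal root has
`Re √z = √((|z| + Re z) / 2) ≥ √(|z| / 2)`, while `|ρ f| = |ρ| |x| ≤ |ρ| (1 - ρ²)^(-1/2) √|z|`.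
Hence `-ξ ψ₀ = ρ f + √z` has real part `Re √z > 0` and modulus at most
`(|ρ| / √(1 - ρ²) + 1) √2 Re √z`.
-/

namespace Complex

lemma norm_cpow_inv_two (z : ℂ) : ‖z ^ (2⁻¹ : ℂ)‖ = √‖z‖ := by
  rw [show (2⁻¹ : ℂ) = ((2⁻¹ : ℝ) : ℂ) by push_cast; rfl, norm_cpow_real, Real.sqrt_eq_rpow,
    one_div]

lemma sqrt_norm_le_sqrt_two_mul_cpow_inv_two_re {z : ℂ} (hz : 0 ≤ z.re) :
    √‖z‖ ≤ √2 * (z ^ (2⁻¹ : ℂ)).re := by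
  rw [cpow_inv_two_re, ← Real.sqrt_mul zero_le_two, mul_div_cancel₀ _ two_ne_zero]
  exact Real.sqrt_le_sqrt (by linarith)

end Complex

open Complex

noncomputable def psi0Disc (ρ : ℝ) (a b : ℂ) : ℂ := a * (1 - (1 - (ρ : ℂ) ^ 2) * a) - 2 * b

noncomputable def psi0Core (ρ : ℝ) (a b : ℂ) : ℂ := ρ * a + psi0Disc ρ a b ^ (2⁻¹ : ℂ)

lemma psi0NL_eq (ξ ρ : ℝ) (f g : ℝ → ℂ) (s : ℝ) :
    psi0NL ξ ρ f g s = -(ξ : ℂ)⁻¹ * psi0Core ρ (f s) (g s) := by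
  rw [psi0NL, psi0Core, psi0Disc, one_div]

section Radicand

variable {ρ : ℝ} {a b : ℂ}

lemma psi0Disc_eq (ha : a.re = 0) (hb : b.re = 0) :
    psi0Disc ρ a b = ((1 - ρ ^ 2) * a.im ^ 2 : ℝ) + ((a.im - 2 * b.im : ℝ) : ℂ) * I := by
  rw [psi0Disc]
  conv_lhs => rw [← re_add_im a, ← re_add_im b, ha, hb]
  push_cast
  linear_combination (-(1 - (ρ : ℂ) ^ 2) * (a.im : ℂ) ^ 2) * I_sq

lemma psi0Disc_re (ha : a.re = 0) (hb : b.re = 0) :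
    (psi0Disc ρ a b).re = (1 - ρ ^ 2) * a.im ^ 2 := by
  rw [psi0Disc_eq ha hb, add_re, ofReal_re, re_ofReal_mul, I_re, mul_zero, add_zero]

lemma psi0Disc_im (ha : a.re = 0) (hb : b.re = 0) : (psi0Disc ρ a b).im = a.im - 2 * b.im := by
  rw [psi0Disc_eq ha hb, add_im, ofReal_im, im_ofReal_mul, I_im, mul_one, zero_add]

lemma psi0Disc_ne_zero (hρ : ρ ^ 2 < 1) (ha : a.re = 0) (hb : b.re = 0)
    (hab : (a, b) ≠ (0, 0)) : psi0Disc ρ a b ≠ 0 := by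
  intro h
  have hre : (1 - ρ ^ 2) * a.im ^ 2 = 0 := by rw [← psi0Disc_re ha hb, h, zero_re]
  have him : a.im - 2 * b.im = 0 := by rw [← psi0Disc_im ha hb, h, zero_im]
  have ha0 : a.im = 0 := by simpa [(by linarith : (1 - ρ ^ 2) ≠ 0)] using hre
  exact hab (Prod.ext (ext ha ha0) (ext hb (by rw [zero_im]; linarith)))

lemma psi0Disc_re_nonneg (hρ : ρ ^ 2 < 1) (ha : a.re = 0) (hb : b.re = 0) :
    0 ≤ (psi0Disc ρ a b).re := by
  rw [psi0Disc_re ha hb]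
  exact mul_nonneg (by linarith) (sq_nonneg _)

lemma sqrt_one_sub_sq_mul_abs_im_le (hρ : ρ ^ 2 < 1) (ha : a.re = 0) (hb : b.re = 0) :
    √(1 - ρ ^ 2) * |a.im| ≤ √‖psi0Disc ρ a b‖ := by
  rw [← Real.sqrt_sq_eq_abs, ← Real.sqrt_mul (by linarith), ← psi0Disc_re ha hb]
  exact Real.sqrt_le_sqrt (re_le_norm _)

lemma psi0Core_re (ha : a.re = 0) : (psi0Core ρ a b).re = (psi0Disc ρ a b ^ (2⁻¹ : ℂ)).re := by
  simp [psi0Core, ha]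

lemma norm_psi0Core_le (hρ : ρ ^ 2 < 1) (ha : a.re = 0) (hb : b.re = 0) :
    ‖psi0Core ρ a b‖ ≤ (|ρ| / √(1 - ρ ^ 2) + 1) * √‖psi0Disc ρ a b‖ := by
  have hs : 0 < √(1 - ρ ^ 2) := Real.sqrt_pos.2 (by linarith)
  have him : |ρ| * |a.im| ≤ |ρ| / √(1 - ρ ^ 2) * √‖psi0Disc ρ a b‖ := by
    rw [div_mul_eq_mul_div, le_div_iff₀ hs, mul_assoc, mul_comm |a.im|]
    exact mul_le_mul_of_nonneg_left (sqrt_one_sub_sq_mul_abs_im_le hρ ha hb) (abs_nonneg ρ)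
  calc ‖psi0Core ρ a b‖ ≤ |ρ| * |a.im| + √‖psi0Disc ρ a b‖ := by
        rw [psi0Core, ← norm_cpow_inv_two, abs_im_eq_norm.2 ha, ← Real.norm_eq_abs, ← norm_real,
          ← norm_mul]
        exact norm_add_le _ _
    _ ≤ _ := by linarith

lemma psi0Core_re_pos (hρ : ρ ^ 2 < 1) (ha : a.re = 0) (hb : b.re = 0)
    (hab : (a, b) ≠ (0, 0)) : 0 < (psi0Core ρ a b).re := by
  have hz : 0 < √‖psi0Disc ρ a b‖ :=
    Real.sqrt_pos.2 (norm_pos_iff.2 (psi0Disc_ne_zero hρ ha hb hab))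
  have := hz.trans_le (sqrt_norm_le_sqrt_two_mul_cpow_inv_two_re (psi0Disc_re_nonneg hρ ha hb))
  rw [psi0Core_re ha]
  exact pos_of_mul_pos_right this (Real.sqrt_nonneg 2)

lemma norm_psi0Core_le_mul_re (hρ : ρ ^ 2 < 1) (ha : a.re = 0) (hb : b.re = 0) :
    ‖psi0Core ρ a b‖ ≤ (|ρ| / √(1 - ρ ^ 2) + 1) * √2 * (psi0Core ρ a b).re := by
  rw [mul_assoc, psi0Core_re ha]
  exact (norm_psi0Core_le hρ ha hb).trans (mul_le_mul_of_nonneg_left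
    (sqrt_norm_le_sqrt_two_mul_cpow_inv_two_re (psi0Disc_re_nonneg hρ ha hb)) (by positivity))

end Radicand

lemma re_neg_ofReal_inv_mul (ξ : ℝ) (u : ℂ) : (-(ξ : ℂ)⁻¹ * u).re = -(ξ⁻¹ * u.re) := by
  rw [← ofReal_inv, ← ofReal_neg, re_ofReal_mul, neg_mul]

lemma norm_neg_ofReal_inv_mul {ξ : ℝ} (hξ : 0 < ξ) (u : ℂ) : ‖-(ξ : ℂ)⁻¹ * u‖ = ξ⁻¹ * ‖u‖ := by
  rw [norm_mul, norm_neg, norm_inv, norm_real, Real.norm_of_nonneg hξ.le]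

theorem stmt9 (ξ ρ T : ℝ) (hξ : 0 < ξ) (hρ : ρ ∈ Ioo (-1:ℝ) 1)
    (f g : ℝ → ℂ)
    (hfre : ∀ s ∈ Icc (0:ℝ) T, (f s).re = 0)
    (hgre : ∀ s ∈ Icc (0:ℝ) T, (g s).re = 0) :
    ∃ C : ℝ, 0 < C ∧ ∀ s ∈ Icc (0:ℝ) T, (f s, g s) ≠ ((0:ℂ), (0:ℂ)) →
      (psi0NL ξ ρ f g s).re < 0 ∧
      ‖psi0NL ξ ρ f g s‖ / (-(psi0NL ξ ρ f g s).re) ≤ C := by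
  have hρ2 : ρ ^ 2 < 1 := by rw [sq_lt_one_iff_abs_lt_one, abs_lt]; exact hρ
  refine ⟨(|ρ| / √(1 - ρ ^ 2) + 1) * √2, by positivity, fun s hs hfg => ?_⟩
  have hre := psi0Core_re_pos hρ2 (hfre s hs) (hgre s hs) hfg
  have hnorm := norm_psi0Core_le_mul_re hρ2 (hfre s hs) (hgre s hs)
  rw [psi0NL_eq, re_neg_ofReal_inv_mul, norm_neg_ofReal_inv_mul hξ, neg_neg,
    mul_div_mul_left _ _ (inv_ne_zero hξ.ne')]
  exact ⟨neg_neg_of_pos (mul_pos (inv_pos.2 hξ) hre), (div_le_iff₀ hre).2 hnorm⟩
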